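/- arXiv:2108.01828 — 3 statements merged into one kernel-verified Lean document; each statement's English description precedes it below -/
import Mathlib

section
/- Let c ≥ 1. The identity matrix I_c (whose rows are the one-hot vectors) is a local maximum of the pairwise-distance objective f on the feasible set K: there exists ε > 0 such that for every matrix T ∈ K with |T i k − I_c i k| < ε for all indices i, k, one has f(T) ≤ f(I_c). -/
open Finset

/-- The pairwise-distance objective: sum over ordered pairs of distinct rows of the
squared Euclidean distance between the rows. -/
def pairwiseDistObj {c : ℕ} (T : Fin c → Fin c → ℝ) : ℝ :=
  ∑ i, ∑ j ∈ Finset.univ.filter (fun j => j ≠ i), ∑ k, (T i k - T j k) ^ 2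

/-- The identity matrix `I_c`, whose rows are the one-hot vectors. -/
def idMat (c : ℕ) : Fin c → Fin c → ℝ := fun i k => if i = k then 1 else 0

lemma double_sum_sq {c : ℕ} (x : Fin c → ℝ) :
    ∑ i, ∑ j, (x i - x j) ^ 2
      = 2 * (c : ℝ) * (∑ i, x i ^ 2) - 2 * (∑ i, x i) ^ 2 := by
  have h : ∀ i : Fin c, ∑ j, (x i - x j) ^ 2
      = (c : ℝ) * x i ^ 2 - 2 * x i * (∑ j, x j) + ∑ j, x j ^ 2 := by
    intro i
    have h1 : ∀ j : Fin c, (x i - x j) ^ 2 = x i ^ 2 - 2 * x i * x j + x j ^ 2 := by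
      intro j; ring
    rw [Finset.sum_congr rfl (fun j _ => h1 j), Finset.sum_add_distrib,
      Finset.sum_sub_distrib, Finset.sum_const, ← Finset.mul_sum]
    simp [Finset.card_univ]
  rw [Finset.sum_congr rfl (fun i _ => h i), Finset.sum_add_distrib,
    Finset.sum_sub_distrib, ← Finset.sum_mul, Finset.sum_const, ← Finset.mul_sum]
  simp only [Finset.card_univ, Fintype.card_fin, nsmul_eq_mul, ← Finset.mul_sum]
  ring

lemma pdo_eq {c : ℕ} (T : Fin c → Fin c → ℝ) :
    pairwiseDistObj T = ∑ k, ∑ i, ∑ j, (T i k - T j k) ^ 2 := by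
  unfold pairwiseDistObj
  have h : ∀ i : Fin c, ∑ j ∈ Finset.univ.filter (fun j => j ≠ i), ∑ k, (T i k - T j k) ^ 2
      = ∑ j, ∑ k, (T i k - T j k) ^ 2 := by
    intro i
    rw [Finset.filter_ne']
    apply Finset.sum_erase
    simp
  rw [Finset.sum_congr rfl (fun i _ => h i)]
  rw [Finset.sum_congr rfl (fun i _ => Finset.sum_comm (f := fun j k => (T i k - T j k)^2) ..)]
  exact Finset.sum_comm ..

/-- The identity matrix is a local maximum of the pairwise-distance objective on the
unit hypercube. -/
theorem idMat_isLocalMax_pairwiseDistObj (c : ℕ) (hc : 1 ≤ c) :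
    ∃ ε > (0 : ℝ), ∀ T : Fin c → Fin c → ℝ,
      (∀ i k, 0 ≤ T i k ∧ T i k ≤ 1) →
      (∀ i k, |T i k - idMat c i k| < ε) →
      pairwiseDistObj T ≤ pairwiseDistObj (idMat c) := by
  have hc' : (1 : ℝ) ≤ (c : ℝ) := by exact_mod_cast hc
  have hcp : (0 : ℝ) < (c : ℝ) + 1 := by linarith
  refine ⟨1 / ((c : ℝ) + 1), by positivity, ?_⟩
  intro T hK hnear
  set ε : ℝ := 1 / ((c : ℝ) + 1) with hεdef
  have hε0 : 0 < ε := by positivity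
  have hεc : ε * ((c : ℝ) + 1) = 1 := by
    rw [hεdef]; field_simp
  rw [pdo_eq, pdo_eq]
  apply Finset.sum_le_sum
  intro k _
  -- identity column value
  have hid : ∑ i, ∑ j, (idMat c i k - idMat c j k) ^ 2 = 2 * (c : ℝ) - 2 := by
    rw [double_sum_sq]
    have h1 : ∑ i : Fin c, idMat c i k ^ 2 = 1 := by
      simp [idMat, apply_ite (· ^ 2 : ℝ → ℝ)]
    have h2 : ∑ i : Fin c, idMat c i k = 1 := by
      simp [idMat]
    rw [h1, h2]; ring
  rw [hid, double_sum_sq]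
  -- column bound
  set x : Fin c → ℝ := fun i => T i k with hxdef
  have hxk1 : 1 - ε ≤ x k := by
    have h := hnear k k
    rw [show idMat c k k = 1 by simp [idMat]] at h
    have h2 := abs_lt.mp h
    simp only [hxdef]
    linarith [h2.1]
  have hxk2 : x k ≤ 1 := (hK k k).2
  have hS0 : (0:ℝ) ≤ ∑ i ∈ Finset.univ.erase k, x i :=
    Finset.sum_nonneg fun i _ => (hK i k).1
  have hQS : ∑ i ∈ Finset.univ.erase k, x i ^ 2 ≤ ε * ∑ i ∈ Finset.univ.erase k, x i := by
    rw [Finset.mul_sum]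
    apply Finset.sum_le_sum
    intro i hi
    have hik : i ≠ k := Finset.ne_of_mem_erase hi
    have h1 := hnear i k
    simp only [idMat, if_neg hik] at h1
    have h2 := abs_lt.mp h1
    have h3 : x i ≤ ε := by simp only [hxdef]; linarith [h2.2]
    have h4 : 0 ≤ x i := (hK i k).1
    nlinarith
  have hsum : ∑ i, x i = x k + ∑ i ∈ Finset.univ.erase k, x i :=
    (Finset.add_sum_erase _ x (Finset.mem_univ k)).symm
  have hsumsq : ∑ i, x i ^ 2 = x k ^ 2 + ∑ i ∈ Finset.univ.erase k, x i ^ 2 :=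
    (Finset.add_sum_erase _ (fun i => x i ^ 2) (Finset.mem_univ k)).symm
  set S := ∑ i ∈ Finset.univ.erase k, x i
  set Q := ∑ i ∈ Finset.univ.erase k, x i ^ 2
  rw [hsum, hsumsq]
  have hxk0 : 0 ≤ x k := (hK k k).1
  have hce : (c:ℝ) * ε = 1 - ε := by linear_combination hεc
  have hQ2 : 2*(c:ℝ)*Q ≤ 2*((1-ε)*S) := by
    have h := mul_le_mul_of_nonneg_left hQS (show (0:ℝ) ≤ 2*(c:ℝ) by linarith)
    have h2 : 2*(c:ℝ)*(ε*S) = 2*((1-ε)*S) := by rw [← hce]; ring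
    linarith
  have haS : (1-ε)*S ≤ x k * S := mul_le_mul_of_nonneg_right hxk1 hS0
  have hεhalf : ε ≤ 1 - ε := by
    nlinarith [mul_nonneg hε0.le (sub_nonneg.mpr hc')]
  have ha2 : 2*((c:ℝ)-1)*(x k^2) ≤ 2*((c:ℝ)-1) := by
    nlinarith [mul_nonneg (sub_nonneg.mpr hc') (sub_nonneg.mpr hxk2), hxk0]
  have hS1 : 0 ≤ (1-ε)*S := mul_nonneg (by linarith) hS0
  nlinarith [sq_nonneg S, hQ2, haS, ha2, hS1]
end

section
/- Let c ≥ 1. The first-order optimality condition for maximizing f over the unit hypercube holds at the identity matrix: for every matrix T ∈ K, the inner product of the gradient of f at I_c with the direction T − I_c is nonpositive, i.e., ∑_{a}∑_{b} 4·(c·(I_c a b) − 1)·(T a b − I_c a b) ≤ 0. -/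
open Finset

/-- First-order optimality condition for maximizing the pairwise-distance objective over
the unit hypercube at the identity matrix: the inner product of the gradient of `f` at
`I_c` with any feasible direction `T − I_c` is nonpositive. -/
theorem firstOrder_optimality_idMat (c : ℕ) (hc : 1 ≤ c) (T : Fin c → Fin c → ℝ)
    (hT : ∀ i k, 0 ≤ T i k ∧ T i k ≤ 1) :
    ∑ a, ∑ b, 4 * ((c : ℝ) * idMat c a b - 1) * (T a b - idMat c a b) ≤ 0 := by
  apply Finset.sum_nonpos
  intro a _
  apply Finset.sum_nonpos
  intro b _
  obtain ⟨h0, h1⟩ := hT a b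
  have hc' : (1 : ℝ) ≤ c := by exact_mod_cast hc
  unfold idMat
  by_cases h : a = b
  · subst h; simp; nlinarith
  · simp [h]; nlinarith
end

section
/- Let c ≥ 1. The pairwise-distance objective is invariant under permuting the rows of a matrix (f(T ∘ σ) = f(T) for every permutation σ of Fin c acting on the row index), and consequently every c×c permutation matrix (each row a one-hot vector, with all rows distinct) is a local maximum of f on the feasible set K. -/
open Finset

/-- The permutation matrix associated with a permutation `σ` of `Fin c`. -/
def permMat {c : ℕ} (σ : Equiv.Perm (Fin c)) : Fin c → Fin c → ℝ :=
  fun i k => if k = σ i then 1 else 0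

/-- `M` is a local maximum of the pairwise-distance objective on the unit hypercube. -/
def IsLocalMaxOnHypercube {c : ℕ} (M : Fin c → Fin c → ℝ) : Prop :=
  ∃ ε > (0 : ℝ), ∀ T : Fin c → Fin c → ℝ,
    (∀ i k, 0 ≤ T i k ∧ T i k ≤ 1) →
    (∀ i k, |T i k - M i k| < ε) →
    pairwiseDistObj T ≤ pairwiseDistObj M

lemma sq_identity {c : ℕ} (a : Fin c → ℝ) :
    ∑ i, ∑ j ∈ Finset.univ.filter (fun j => j ≠ i), (a i - a j) ^ 2
      = 2 * c * ∑ i, (a i) ^ 2 - 2 * (∑ i, a i) ^ 2 := by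
  have h : ∀ i : Fin c, ∑ j ∈ Finset.univ.filter (fun j => j ≠ i), (a i - a j) ^ 2
      = ∑ j, (a i - a j) ^ 2 := by
    intro i
    rw [Finset.filter_ne', Finset.sum_erase _ (by ring)]
  have e1 : ∀ i, ∑ j : Fin c, (a i - a j) ^ 2
      = (a i) ^ 2 * c - 2 * a i * (∑ j, a j) + ∑ j, (a j) ^ 2 := by
    intro i
    simp_rw [sub_sq, Finset.sum_add_distrib, Finset.sum_sub_distrib, Finset.sum_const,
      card_univ, Fintype.card_fin, nsmul_eq_mul, mul_assoc, ← Finset.mul_sum]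
    ring
  simp_rw [h, e1, Finset.sum_add_distrib, Finset.sum_sub_distrib, Finset.sum_const,
    card_univ, Fintype.card_fin, nsmul_eq_mul, ← Finset.sum_mul, mul_assoc, ← Finset.mul_sum]
  ring

lemma obj_eq {c : ℕ} (T : Fin c → Fin c → ℝ) :
    pairwiseDistObj T
      = ∑ k, (2 * c * ∑ i, (T i k) ^ 2 - 2 * (∑ i, T i k) ^ 2) := by
  unfold pairwiseDistObj
  rw [show (∑ i, ∑ j ∈ Finset.univ.filter (fun j => j ≠ i), ∑ k, (T i k - T j k) ^ 2)
      = ∑ k, ∑ i, ∑ j ∈ Finset.univ.filter (fun j => j ≠ i), (T i k - T j k) ^ 2 by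
    rw [Finset.sum_comm]
    exact Finset.sum_congr rfl fun i _ => Finset.sum_comm]
  exact Finset.sum_congr rfl fun k _ => sq_identity _

/-- The pairwise-distance objective is invariant under permuting the rows of a matrix,
and consequently every permutation matrix is a local maximum of the objective on the
unit hypercube. -/
theorem pairwiseDistObj_perm_invariant (c : ℕ) (hc : 1 ≤ c) :
    (∀ (T : Fin c → Fin c → ℝ) (σ : Equiv.Perm (Fin c)),
      pairwiseDistObj (fun i => T (σ i)) = pairwiseDistObj T) ∧
    (∀ σ : Equiv.Perm (Fin c), IsLocalMaxOnHypercube (permMat σ)) := by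
  constructor
  · intro T σ
    rw [obj_eq, obj_eq]
    refine Finset.sum_congr rfl fun k _ => ?_
    rw [Equiv.sum_comp σ (fun i => (T i k) ^ 2), Equiv.sum_comp σ (fun i => T i k)]
  · intro σ
    by_cases h1 : c = 1
    · subst h1
      refine ⟨1, one_pos, fun T _ _ => ?_⟩
      have h0 : ∀ S : Fin 1 → Fin 1 → ℝ, pairwiseDistObj S = 0 := by
        intro S
        unfold pairwiseDistObj
        refine Finset.sum_eq_zero fun i _ => ?_
        have he : Finset.univ.filter (fun j => j ≠ i) = (∅ : Finset (Fin 1)) := by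
          rw [Finset.filter_eq_empty_iff]
          intro j _
          simp [Subsingleton.elim j i]
        rw [he, Finset.sum_empty]
      rw [h0, h0]
    · have hc2 : 2 ≤ c := by omega
      have hc2' : (2 : ℝ) ≤ (c : ℝ) := by exact_mod_cast hc2
      have hcpos : (0 : ℝ) < (c : ℝ) := by linarith
      refine ⟨1 / c, by positivity, fun T hT hnear => ?_⟩
      rw [obj_eq, obj_eq]
      refine Finset.sum_le_sum fun k _ => ?_
      set i0 := σ.symm k with hi0
      have hP : ∀ i, permMat σ i k = if i = i0 then 1 else 0 := by
        intro i
        unfold permMat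
        by_cases h : i = i0
        · subst h; simp [hi0]
        · have : k ≠ σ i := by
            intro hk
            exact h (by rw [hi0, hk]; simp)
          simp [this, h]
      have hsq : ∑ i, (permMat σ i k) ^ 2 = 1 := by
        simp [hP, Finset.sum_ite_eq']
      have hs1 : ∑ i, permMat σ i k = 1 := by
        simp [hP, Finset.sum_ite_eq']
      rw [hsq, hs1]
      set a : Fin c → ℝ := fun i => T i k with ha
      -- key pointwise bounds
      have key : ∑ i, ((c : ℝ) * (a i) ^ 2 - 2 * a i) ≤ (c : ℝ) - 2 := by
        rw [← Finset.sum_erase_add _ _ (Finset.mem_univ i0)]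
        have hmain : (c : ℝ) * (a i0) ^ 2 - 2 * a i0 ≤ (c : ℝ) - 2 := by
          have h1 : a i0 ≤ 1 := (hT i0 k).2
          have h2 : 0 ≤ a i0 := (hT i0 k).1
          nlinarith [mul_nonneg (sub_nonneg.2 h1) (show (0:ℝ) ≤ (c:ℝ) * (a i0 + 1) - 2 by nlinarith)]
        have hrest : ∑ i ∈ Finset.univ.erase i0, ((c : ℝ) * (a i) ^ 2 - 2 * a i) ≤ 0 := by
          refine Finset.sum_nonpos fun i hi => ?_
          have hne : i ≠ i0 := Finset.ne_of_mem_erase hi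
          have h2 : 0 ≤ a i := (hT i k).1
          have h3 : |T i k - permMat σ i k| < 1 / c := hnear i k
          rw [hP i, if_neg hne, sub_zero] at h3
          have h4 : a i < 1 / c := lt_of_abs_lt h3
          have h5 : (c : ℝ) * a i < 1 := by
            rw [mul_comm, ← lt_div_iff₀ hcpos]
            exact h4
          nlinarith [mul_nonneg h2 (sub_nonneg.2 h5.le)]
        linarith
      have hsum : ∑ i, ((c : ℝ) * (a i) ^ 2 - 2 * a i)
          = (c : ℝ) * ∑ i, (a i) ^ 2 - 2 * ∑ i, a i := by
        rw [Finset.sum_sub_distrib, ← Finset.mul_sum, ← Finset.mul_sum]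
      rw [hsum] at key
      nlinarith [sq_nonneg ((∑ i, a i) - 1)]
end
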